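/- arXiv:1808.09818 — 2 statements merged into one kernel-verified Lean document; each statement's English description precedes it below -/
import Mathlib

section
/- Define P_c(λ₀, μ) = π(λ₀ + μ)/(π(λ₀β + μ) + γ₀) with β > 1, γ₀ > 0, μ ≥ 0 fixed. Then ∂P_c/∂λ₀ = π(γ₀ − πμ(β−1))/(π(λ₀β+μ)+γ₀)², and if πμ(β−1) > γ₀ then P_c is strictly decreasing in λ₀ on [0, ∞). -/
open Real Set

lemma stmt_6_aux (β γ₀ μ : ℝ) (hβ : 1 < β) (hγ : 0 < γ₀) (hμ : 0 ≤ μ)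
    (x : ℝ) (hx : 0 ≤ x) :
    HasDerivAt (fun x : ℝ => π * (x + μ) / (π * (x * β + μ) + γ₀))
      (π * (γ₀ - π * μ * (β - 1)) / (π * (x * β + μ) + γ₀) ^ 2) x := by
  have hD : 0 < π * (x * β + μ) + γ₀ := by
    have : 0 ≤ π * (x * β + μ) := by positivity
    linarith
  have h1 : HasDerivAt (fun x : ℝ => π * (x + μ)) π x := by
    simpa using ((hasDerivAt_id x).add_const μ).const_mul π
  have h2 : HasDerivAt (fun x : ℝ => π * (x * β + μ) + γ₀) (π * β) x := by
    simpa using (((hasDerivAt_id x).mul_const β).add_const μ).const_mul π |>.add_const γ₀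
  have := h1.fun_div h2 hD.ne'
  refine this.congr_deriv ?_
  ring

/-- For `P_c(λ₀) = π(λ₀+μ)/(π(λ₀β+μ)+γ₀)` with `β > 1`, `γ₀ > 0`, `μ ≥ 0`:
the derivative in `λ₀` equals `π(γ₀ − πμ(β−1))/(π(λ₀β+μ)+γ₀)²`, and if
`πμ(β−1) > γ₀` then `P_c` is strictly decreasing in `λ₀` on `[0,∞)`. -/
theorem stmt_6 (β γ₀ μ : ℝ) (hβ : 1 < β) (hγ : 0 < γ₀) (hμ : 0 ≤ μ) :
    (∀ l0 : ℝ, 0 ≤ l0 →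
      deriv (fun x : ℝ => π * (x + μ) / (π * (x * β + μ) + γ₀)) l0 =
        π * (γ₀ - π * μ * (β - 1)) / (π * (l0 * β + μ) + γ₀) ^ 2) ∧
    (π * μ * (β - 1) > γ₀ →
      StrictAntiOn (fun x : ℝ => π * (x + μ) / (π * (x * β + μ) + γ₀)) (Set.Ici 0)) := by
  constructor
  · intro l0 hl0
    exact (stmt_6_aux β γ₀ μ hβ hγ hμ l0 hl0).deriv
  · intro hgt
    apply strictAntiOn_of_deriv_neg (convex_Ici 0)
    · apply ContinuousOn.div
      · fun_prop
      · fun_prop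
      · intro x hx
        have hx0 : (0:ℝ) ≤ x := hx
        have hxb : 0 ≤ x * β := mul_nonneg hx0 (by linarith)
        have h1 : 0 ≤ π * (x * β + μ) := mul_nonneg Real.pi_pos.le (by linarith)
        positivity
    · intro x hx
      rw [interior_Ici] at hx
      rw [(stmt_6_aux β γ₀ μ hβ hγ hμ x hx.le).deriv]
      have hxb : 0 ≤ x * β := mul_nonneg hx.le (by linarith)
      have hD : 0 < π * (x * β + μ) + γ₀ := by
        have h1 : 0 ≤ π * (x * β + μ) := mul_nonneg Real.pi_pos.le (by linarith)
        linarith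
      apply div_neg_of_neg_of_pos
      · have := Real.pi_pos
        nlinarith
      · positivity
end

section
/- Let α > 2, and suppose P_c(p) = λπ / (π λ β' + γ(p)) where γ(p) = (α/2)·(Tσ²/p)^(2/α)/Γ(2/α) for p > 0, with λ > 0, β' ≥ 1, T > 0, σ² > 0 fixed. If 0 < ε < 1 and 1 − ε < 1/β', then the equation P_c(p) = 1 − ε has the unique positive solution p = c·λ^(−α/2), where c = [ 2π(1−(1−ε)β')Γ(2/α) / (α(1−ε)(Tσ²)^(2/α)) ]^(−α/2). -/
open Real

/-- Minimum power to satisfy QoS: with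
`P_c(p) = πλ/(πλβ' + (α/2)(Tσ²/p)^(2/α)/Γ(2/α))` and target `1−ε < 1/β'`, the equation
`P_c(p) = 1−ε` has the unique positive solution `p = c·λ^(−α/2)` with
`c = [2π(1−(1−ε)β')Γ(2/α)/(α(1−ε)(Tσ²)^(2/α))]^(−α/2)`. -/
theorem stmt_9 (α lam β' T σ2 ε : ℝ) (hα : 2 < α) (hlam : 0 < lam) (hβ' : 1 ≤ β')
    (hT : 0 < T) (hσ : 0 < σ2) (hε0 : 0 < ε) (hε1 : ε < 1) (hfeas : 1 - ε < 1 / β')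
    (Pc : ℝ → ℝ)
    (hPc : ∀ p, Pc p =
      π * lam / (π * lam * β' + (α / 2) * (T * σ2 / p) ^ (2 / α) / Real.Gamma (2 / α)))
    (c : ℝ)
    (hc : c = ((2 * π * (1 - (1 - ε) * β') * Real.Gamma (2 / α)) /
        (α * (1 - ε) * (T * σ2) ^ (2 / α))) ^ (-(α / 2))) :
    (0 < c * lam ^ (-(α / 2)) ∧ Pc (c * lam ^ (-(α / 2))) = 1 - ε) ∧
    ∀ p > 0, Pc p = 1 - ε → p = c * lam ^ (-(α / 2)) := by
  have hα0 : (0:ℝ) < α := by linarith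
  have hβ0 : (0:ℝ) < β' := by linarith
  have h1ε : (0:ℝ) < 1 - ε := by linarith
  have hfeas' : (1 - ε) * β' < 1 := (lt_div_iff₀ hβ0).mp hfeas
  have hnum : 0 < 1 - (1 - ε) * β' := by linarith
  have hg : 0 < Real.Gamma (2 / α) := Real.Gamma_pos_of_pos (by positivity)
  have hTσ : 0 < T * σ2 := mul_pos hT hσ
  have hTσr : 0 < (T * σ2) ^ (2 / α) := Real.rpow_pos_of_pos hTσ _
  have hπ := Real.pi_pos
  set K : ℝ := (2 * π * (1 - (1 - ε) * β') * Real.Gamma (2 / α)) /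
      (α * (1 - ε) * (T * σ2) ^ (2 / α)) with hKdef
  have hK : 0 < K := by positivity
  have hc0 : 0 < c := hc ▸ Real.rpow_pos_of_pos hK _
  set p₀ : ℝ := c * lam ^ (-(α / 2)) with hp0def
  have hp0 : 0 < p₀ := mul_pos hc0 (Real.rpow_pos_of_pos hlam _)
  set D : ℝ := 2 * π * lam * (1 - (1 - ε) * β') * Real.Gamma (2 / α) / (α * (1 - ε))
    with hDdef
  have hD : 0 < D := by positivity
  -- key characterization
  have hkey : ∀ p : ℝ, 0 < p → (Pc p = 1 - ε ↔ (T * σ2 / p) ^ (2 / α) = D) := by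
    intro p hp
    have hX : 0 < (T * σ2 / p) ^ (2 / α) := Real.rpow_pos_of_pos (by positivity) _
    set X := (T * σ2 / p) ^ (2 / α) with hXdef
    have hden : 0 < π * lam * β' + (α / 2) * X / Real.Gamma (2 / α) := by positivity
    rw [hPc, div_eq_iff hden.ne']
    rw [hDdef]
    constructor
    · intro h
      field_simp at h ⊢
      linear_combination (-1 : ℝ) * h
    · intro h
      field_simp at h ⊢
      linear_combination (-1 : ℝ) * h
  -- exponent arithmetic
  have hexp : α / 2 * (2 / α) = 1 := by field_simp
  -- value at p₀
  have hX0 : (T * σ2 / p₀) ^ (2 / α) = D := by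
    have hKα : (0:ℝ) < K ^ (α / 2) := Real.rpow_pos_of_pos hK _
    have hlα : (0:ℝ) < lam ^ (α / 2) := Real.rpow_pos_of_pos hlam _
    have hcinv : T * σ2 / p₀ = T * σ2 * (K * lam) ^ (α / 2) := by
      rw [hp0def, hc, Real.rpow_neg hK.le, Real.rpow_neg hlam.le,
        Real.mul_rpow hK.le hlam.le]
      field_simp
    rw [hcinv, Real.mul_rpow hTσ.le (Real.rpow_nonneg (by positivity) _),
      ← Real.rpow_mul (by positivity), hexp, Real.rpow_one, hKdef, hDdef]
    field_simp
  refine ⟨⟨hp0, (hkey p₀ hp0).mpr hX0⟩, ?_⟩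
  intro p hp hPcp
  have hXp : (T * σ2 / p) ^ (2 / α) = (T * σ2 / p₀) ^ (2 / α) := by
    rw [hX0]; exact (hkey p hp).mp hPcp
  have h2 : T * σ2 / p = T * σ2 / p₀ := by
    have := congrArg (fun x : ℝ => x ^ (α / 2)) hXp
    simpa [← Real.rpow_mul (le_of_lt (by positivity : (0:ℝ) < T * σ2 / p)),
      ← Real.rpow_mul (le_of_lt (by positivity : (0:ℝ) < T * σ2 / p₀)),
      div_mul_div_comm, show 2 / α * (α / 2) = 1 by field_simp, Real.rpow_one] using this
  have : T * σ2 * p₀ = T * σ2 * p := by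
    rw [div_eq_div_iff hp.ne' hp0.ne'] at h2
    linarith [h2]
  exact (mul_left_cancel₀ hTσ.ne' this).symm
end
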